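/- Rotation of the adapted normal frame (proof of Theorem 3.1): in the S⁴ frame setup, the normal covariant derivative of the unit normal field ψ₃ satisfies N_z ψ₃ = i θ_z ψ₄ pointwise on ℂ. -/

import Mathlib

open Complex

noncomputable section

/-- Wirtinger derivative `∂_z` of a map `ℂ → ℂ`. -/
def wirtZ (g : ℂ → ℂ) (z : ℂ) : ℂ :=
  (1 / 2 : ℂ) * (fderiv ℝ g z 1 - Complex.I * fderiv ℝ g z Complex.I)

/-- Wirtinger derivative `∂_z̄` of a map `ℂ → ℂ`. -/
def wirtZbar (g : ℂ → ℂ) (z : ℂ) : ℂ :=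
  (1 / 2 : ℂ) * (fderiv ℝ g z 1 + Complex.I * fderiv ℝ g z Complex.I)

/-- Componentwise `∂_z` for vector-valued maps. -/
def WZ {m : ℕ} (g : ℂ → Fin m → ℂ) : ℂ → Fin m → ℂ :=
  fun z i => wirtZ (fun w => g w i) z

/-- Componentwise `∂_z̄` for vector-valued maps. -/
def WZb {m : ℕ} (g : ℂ → Fin m → ℂ) : ℂ → Fin m → ℂ :=
  fun z i => wirtZbar (fun w => g w i) z

/-- Complex-bilinear (non-conjugating) pairing. -/
def pairC {m : ℕ} (u v : Fin m → ℂ) : ℂ := ∑ i, u i * v i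

/-- Componentwise complex conjugation. -/
def conjV {m : ℕ} (u : Fin m → ℂ) : Fin m → ℂ := fun i => (starRingEnd ℂ) (u i)

/-- Complexification of a real vector. -/
def cV {m : ℕ} (u : Fin m → ℝ) : Fin m → ℂ := fun i => (u i : ℂ)

/-- Complexification of a real-vector-valued map. -/
def Fc {m : ℕ} (f : ℂ → Fin m → ℝ) : ℂ → Fin m → ℂ := fun z => cV (f z)

/-- `∂_z` of (the complexification of) a real-valued function. -/
def dZ (ρ : ℂ → ℝ) (z : ℂ) : ℂ := wirtZ (fun w => ((ρ w : ℝ) : ℂ)) z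

/-- `f : ℂ → S^n ⊂ ℝ^{n+1}` is a conformal minimal immersion with conformal factor `ρ`:
`⟨f_z, f_z⟩ = 0`, `⟨f_z, f̄_z⟩ = (1/2) e^{2ρ}`, and `f_{z z̄} = −(1/2) e^{2ρ} f`. -/
def IsConfMinImm {m : ℕ} (f : ℂ → Fin m → ℝ) (ρ : ℂ → ℝ) : Prop :=
  ContDiff ℝ (⊤ : ℕ∞) f ∧ ContDiff ℝ (⊤ : ℕ∞) ρ ∧
  (∀ z, ∑ i, (f z i) ^ 2 = 1) ∧
  (∀ z, pairC (WZ (Fc f) z) (WZ (Fc f) z) = 0) ∧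
  (∀ z, pairC (WZ (Fc f) z) (conjV (WZ (Fc f) z)) = (1 / 2 : ℂ) * (Real.exp (2 * ρ z) : ℂ)) ∧
  (∀ z i, WZb (WZ (Fc f)) z i = -(1 / 2 : ℂ) * (Real.exp (2 * ρ z) : ℂ) * Fc f z i)

/-- The Hopf field `Ω = f_{zz} − 2 ρ_z f_z`. -/
def Hopf {m : ℕ} (f : ℂ → Fin m → ℝ) (ρ : ℂ → ℝ) : ℂ → Fin m → ℂ :=
  fun z i => WZ (WZ (Fc f)) z i - 2 * dZ ρ z * WZ (Fc f) z i

/-- Real part `Ω₁` of the Hopf field, viewed in `ℂ^{n+1}`. -/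
def HopfRe {m : ℕ} (f : ℂ → Fin m → ℝ) (ρ : ℂ → ℝ) : ℂ → Fin m → ℂ :=
  fun z i => ((Hopf f ρ z i).re : ℂ)

/-- Imaginary part `Ω₂` of the Hopf field, viewed in `ℂ^{n+1}`. -/
def HopfIm {m : ℕ} (f : ℂ → Fin m → ℝ) (ρ : ℂ → ℝ) : ℂ → Fin m → ℂ :=
  fun z i => ((Hopf f ρ z i).im : ℂ)

/-- Normal projection `E^⊥` of a constant vector `E ∈ ℝ^{n+1}`. -/
def Eperp {m : ℕ} (f : ℂ → Fin m → ℝ) (ρ : ℂ → ℝ) (E : Fin m → ℝ) : ℂ → Fin m → ℂ :=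
  fun z i => (E i : ℂ) - pairC (cV E) (Fc f z) * Fc f z i
    - 2 * (Real.exp (-2 * ρ z) : ℂ) * pairC (cV E) (WZ (Fc f) z) * WZb (Fc f) z i
    - 2 * (Real.exp (-2 * ρ z) : ℂ) * pairC (cV E) (WZb (Fc f) z) * WZ (Fc f) z i

/-- `ψ` is a normal field along `f`. -/
def IsNormalField {m : ℕ} (f : ℂ → Fin m → ℝ) (ψ : ℂ → Fin m → ℂ) : Prop :=
  ∀ z, pairC (ψ z) (Fc f z) = 0 ∧ pairC (ψ z) (WZ (Fc f) z) = 0 ∧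
    pairC (ψ z) (WZb (Fc f) z) = 0

/-- Normal covariant derivative `N_z ψ = ψ_z + 2 e^{−2ρ} ⟨ψ, Ω⟩ f_z̄`. -/
def NZ {m : ℕ} (f : ℂ → Fin m → ℝ) (ρ : ℂ → ℝ) (ψ : ℂ → Fin m → ℂ) : ℂ → Fin m → ℂ :=
  fun z i => WZ ψ z i
    + 2 * (Real.exp (-2 * ρ z) : ℂ) * pairC (ψ z) (Hopf f ρ z) * WZb (Fc f) z i

/-- Normal covariant derivative `N_z̄ ψ = ψ_z̄ + 2 e^{−2ρ} ⟨ψ, Ω̄⟩ f_z`. -/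
def NZb {m : ℕ} (f : ℂ → Fin m → ℝ) (ρ : ℂ → ℝ) (ψ : ℂ → Fin m → ℂ) : ℂ → Fin m → ℂ :=
  fun z i => WZb ψ z i
    + 2 * (Real.exp (-2 * ρ z) : ℂ) * pairC (ψ z) (conjV (Hopf f ρ z)) * WZ (Fc f) z i

/-- Normal Laplacian `Δ^⊥ ψ = 2 e^{−2ρ} (N_z̄ (N_z ψ) + N_z (N_z̄ ψ))`. -/
def LapPerp {m : ℕ} (f : ℂ → Fin m → ℝ) (ρ : ℂ → ℝ) (ψ : ℂ → Fin m → ℂ) : ℂ → Fin m → ℂ :=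
  fun z i => 2 * (Real.exp (-2 * ρ z) : ℂ) * (NZb f ρ (NZ f ρ ψ) z i + NZ f ρ (NZb f ρ ψ) z i)

/-- Jacobi operator `𝓛 ψ = Δ^⊥ ψ + 2 ψ + 4 e^{−4ρ} (⟨ψ, Ω⟩ Ω̄ + ⟨ψ, Ω̄⟩ Ω)`. -/
def Jacobi {m : ℕ} (f : ℂ → Fin m → ℝ) (ρ : ℂ → ℝ) (ψ : ℂ → Fin m → ℂ) : ℂ → Fin m → ℂ :=
  fun z i => LapPerp f ρ ψ z i + 2 * ψ z i
    + 4 * (Real.exp (-4 * ρ z) : ℂ) *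
      (pairC (ψ z) (Hopf f ρ z) * conjV (Hopf f ρ z) i
        + pairC (ψ z) (conjV (Hopf f ρ z)) * Hopf f ρ z i)

/-- The S⁴ adapted frame setup: `⟨Ω, Ω⟩ ≡ 1`, `Ω₁ = cosh θ · ψ₃`, `Ω₂ = sinh θ · ψ₄`
with `ψ₃, ψ₄` orthonormal normal fields. -/
def S4Frame (f : ℂ → Fin 5 → ℝ) (ρ : ℂ → ℝ) (ψ₃ ψ₄ : ℂ → Fin 5 → ℝ) (θ : ℂ → ℝ) : Prop :=
  ContDiff ℝ (⊤ : ℕ∞) ψ₃ ∧ ContDiff ℝ (⊤ : ℕ∞) ψ₄ ∧ ContDiff ℝ (⊤ : ℕ∞) θ ∧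
  IsNormalField f (Fc ψ₃) ∧ IsNormalField f (Fc ψ₄) ∧
  (∀ z, ∑ i, (ψ₃ z i) ^ 2 = 1) ∧ (∀ z, ∑ i, (ψ₄ z i) ^ 2 = 1) ∧
  (∀ z, ∑ i, ψ₃ z i * ψ₄ z i = 0) ∧
  (∀ z, pairC (Hopf f ρ z) (Hopf f ρ z) = 1) ∧
  (∀ z i, (Hopf f ρ z i).re = Real.cosh (θ z) * ψ₃ z i) ∧
  (∀ z i, (Hopf f ρ z i).im = Real.sinh (θ z) * ψ₄ z i)



-- product rule
lemma wirtZ_mul {g h : ℂ → ℂ} {z : ℂ} (hg : DifferentiableAt ℝ g z)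
    (hh : DifferentiableAt ℝ h z) :
    wirtZ (fun w => g w * h w) z = wirtZ g z * h z + g z * wirtZ h z := by
  unfold wirtZ
  rw [fderiv_fun_mul hg hh]
  simp only [ContinuousLinearMap.add_apply, ContinuousLinearMap.smul_apply, smul_eq_mul]
  ring

lemma wirtZbar_mul {g h : ℂ → ℂ} {z : ℂ} (hg : DifferentiableAt ℝ g z)
    (hh : DifferentiableAt ℝ h z) :
    wirtZbar (fun w => g w * h w) z = wirtZbar g z * h z + g z * wirtZbar h z := by
  unfold wirtZbar
  rw [fderiv_fun_mul hg hh]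
  simp only [ContinuousLinearMap.add_apply, ContinuousLinearMap.smul_apply, smul_eq_mul]
  ring

lemma wirtZ_add {g h : ℂ → ℂ} {z : ℂ} (hg : DifferentiableAt ℝ g z)
    (hh : DifferentiableAt ℝ h z) :
    wirtZ (fun w => g w + h w) z = wirtZ g z + wirtZ h z := by
  unfold wirtZ; rw [fderiv_fun_add hg hh]
  simp only [ContinuousLinearMap.add_apply]; ring

lemma wirtZbar_add {g h : ℂ → ℂ} {z : ℂ} (hg : DifferentiableAt ℝ g z)
    (hh : DifferentiableAt ℝ h z) :
    wirtZbar (fun w => g w + h w) z = wirtZbar g z + wirtZbar h z := by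
  unfold wirtZbar; rw [fderiv_fun_add hg hh]
  simp only [ContinuousLinearMap.add_apply]; ring

lemma wirtZ_sub {g h : ℂ → ℂ} {z : ℂ} (hg : DifferentiableAt ℝ g z)
    (hh : DifferentiableAt ℝ h z) :
    wirtZ (fun w => g w - h w) z = wirtZ g z - wirtZ h z := by
  unfold wirtZ; rw [fderiv_fun_sub hg hh]
  simp only [ContinuousLinearMap.sub_apply]; ring

lemma wirtZbar_sub {g h : ℂ → ℂ} {z : ℂ} (hg : DifferentiableAt ℝ g z)
    (hh : DifferentiableAt ℝ h z) :
    wirtZbar (fun w => g w - h w) z = wirtZbar g z - wirtZbar h z := by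
  unfold wirtZbar; rw [fderiv_fun_sub hg hh]
  simp only [ContinuousLinearMap.sub_apply]; ring

lemma wirtZ_const (c : ℂ) (z : ℂ) : wirtZ (fun _ => c) z = 0 := by
  unfold wirtZ; rw [fderiv_fun_const]; simp

lemma wirtZbar_const (c : ℂ) (z : ℂ) : wirtZbar (fun _ => c) z = 0 := by
  unfold wirtZbar; rw [fderiv_fun_const]; simp

lemma wirtZ_sum {ι : Type*} (s : Finset ι) {F : ι → ℂ → ℂ} {z : ℂ}
    (h : ∀ i ∈ s, DifferentiableAt ℝ (F i) z) :
    wirtZ (fun w => ∑ i ∈ s, F i w) z = ∑ i ∈ s, wirtZ (F i) z := by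
  unfold wirtZ; rw [fderiv_fun_sum h]
  simp only [ContinuousLinearMap.sum_apply, Finset.mul_sum, ← Finset.sum_sub_distrib, mul_sub]

lemma wirtZbar_sum {ι : Type*} (s : Finset ι) {F : ι → ℂ → ℂ} {z : ℂ}
    (h : ∀ i ∈ s, DifferentiableAt ℝ (F i) z) :
    wirtZbar (fun w => ∑ i ∈ s, F i w) z = ∑ i ∈ s, wirtZbar (F i) z := by
  unfold wirtZbar; rw [fderiv_fun_sum h]
  simp only [ContinuousLinearMap.sum_apply, Finset.mul_sum, ← Finset.sum_add_distrib, mul_add]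

-- conjugation
lemma wirtZ_conj {g : ℂ → ℂ} {z : ℂ} (hg : DifferentiableAt ℝ g z) :
    wirtZ (fun w => (starRingEnd ℂ) (g w)) z = (starRingEnd ℂ) (wirtZbar g z) := by
  have h1 : fderiv ℝ (fun w => (starRingEnd ℂ) (g w)) z
      = Complex.conjCLE.toContinuousLinearMap.comp (fderiv ℝ g z) := by
    have := (Complex.conjCLE.toContinuousLinearMap.hasFDerivAt.comp z hg.hasFDerivAt)
    exact this.fderiv
  unfold wirtZ wirtZbar
  rw [h1]
  simp only [ContinuousLinearMap.coe_comp', Function.comp_apply,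
    ContinuousLinearEquiv.coe_coe, Complex.conjCLE_apply, map_mul, map_add, map_sub, map_div₀, map_one, map_ofNat]
  rw [Complex.conj_I]
  ring

lemma wirtZbar_conj {g : ℂ → ℂ} {z : ℂ} (hg : DifferentiableAt ℝ g z) :
    wirtZbar (fun w => (starRingEnd ℂ) (g w)) z = (starRingEnd ℂ) (wirtZ g z) := by
  have h1 : fderiv ℝ (fun w => (starRingEnd ℂ) (g w)) z
      = Complex.conjCLE.toContinuousLinearMap.comp (fderiv ℝ g z) := by
    have := (Complex.conjCLE.toContinuousLinearMap.hasFDerivAt.comp z hg.hasFDerivAt)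
    exact this.fderiv
  unfold wirtZ wirtZbar
  rw [h1]
  simp only [ContinuousLinearMap.coe_comp', Function.comp_apply,
    ContinuousLinearEquiv.coe_coe, Complex.conjCLE_apply, map_mul, map_add, map_sub, map_div₀, map_one, map_ofNat]
  rw [Complex.conj_I]
  ring

-- smoothness of wirtinger derivatives
lemma ContDiff.wirtZ_smooth {g : ℂ → ℂ} (hg : ContDiff ℝ (⊤ : ℕ∞) g) :
    ContDiff ℝ (⊤ : ℕ∞) (wirtZ g) := by
  have h := hg.fderiv_right (m := (⊤ : ℕ∞)) le_rfl
  have h1 : ContDiff ℝ (⊤ : ℕ∞) (fun z => fderiv ℝ g z 1) :=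
    (ContinuousLinearMap.apply ℝ ℂ (1 : ℂ)).contDiff.comp h
  have h2 : ContDiff ℝ (⊤ : ℕ∞) (fun z => fderiv ℝ g z Complex.I) :=
    (ContinuousLinearMap.apply ℝ ℂ (Complex.I : ℂ)).contDiff.comp h
  exact contDiff_const.mul (h1.sub (contDiff_const.mul h2))

lemma ContDiff.wirtZbar_smooth {g : ℂ → ℂ} (hg : ContDiff ℝ (⊤ : ℕ∞) g) :
    ContDiff ℝ (⊤ : ℕ∞) (wirtZbar g) := by
  have h := hg.fderiv_right (m := (⊤ : ℕ∞)) le_rfl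
  have h1 : ContDiff ℝ (⊤ : ℕ∞) (fun z => fderiv ℝ g z 1) :=
    (ContinuousLinearMap.apply ℝ ℂ (1 : ℂ)).contDiff.comp h
  have h2 : ContDiff ℝ (⊤ : ℕ∞) (fun z => fderiv ℝ g z Complex.I) :=
    (ContinuousLinearMap.apply ℝ ℂ (Complex.I : ℂ)).contDiff.comp h
  exact contDiff_const.mul (h1.add (contDiff_const.mul h2))

-- chain rule for real functions composed with real scalar functions
lemma wirtZ_real_comp {u : ℂ → ℝ} {F : ℝ → ℝ} {d : ℝ} {z : ℂ}
    (hF : HasDerivAt F d (u z)) (hu : DifferentiableAt ℝ u z) :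
    wirtZ (fun w => ((F (u w) : ℝ) : ℂ)) z
      = (d : ℂ) * wirtZ (fun w => ((u w : ℝ) : ℂ)) z := by
  have hcomp : HasFDerivAt (fun w => ((F (u w) : ℝ) : ℂ))
      (Complex.ofRealCLM.comp (d • fderiv ℝ u z)) z := by
    exact Complex.ofRealCLM.hasFDerivAt.comp z
      (hF.comp_hasFDerivAt z hu.hasFDerivAt)
  have hu' : fderiv ℝ (fun w => ((u w : ℝ) : ℂ)) z
      = Complex.ofRealCLM.comp (fderiv ℝ u z) :=
    (Complex.ofRealCLM.hasFDerivAt.comp z hu.hasFDerivAt).fderiv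
  unfold wirtZ
  rw [hcomp.fderiv, hu']
  simp only [ContinuousLinearMap.coe_comp', Function.comp_apply,
    ContinuousLinearMap.smul_apply, Complex.ofRealCLM_apply, smul_eq_mul,
    Complex.ofReal_mul]
  ring

lemma wirtZbar_real_comp {u : ℂ → ℝ} {F : ℝ → ℝ} {d : ℝ} {z : ℂ}
    (hF : HasDerivAt F d (u z)) (hu : DifferentiableAt ℝ u z) :
    wirtZbar (fun w => ((F (u w) : ℝ) : ℂ)) z
      = (d : ℂ) * wirtZbar (fun w => ((u w : ℝ) : ℂ)) z := by
  have hcomp : HasFDerivAt (fun w => ((F (u w) : ℝ) : ℂ))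
      (Complex.ofRealCLM.comp (d • fderiv ℝ u z)) z := by
    exact Complex.ofRealCLM.hasFDerivAt.comp z
      (hF.comp_hasFDerivAt z hu.hasFDerivAt)
  have hu' : fderiv ℝ (fun w => ((u w : ℝ) : ℂ)) z
      = Complex.ofRealCLM.comp (fderiv ℝ u z) :=
    (Complex.ofRealCLM.hasFDerivAt.comp z hu.hasFDerivAt).fderiv
  unfold wirtZbar
  rw [hcomp.fderiv, hu']
  simp only [ContinuousLinearMap.coe_comp', Function.comp_apply,
    ContinuousLinearMap.smul_apply, Complex.ofRealCLM_apply, smul_eq_mul,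
    Complex.ofReal_mul]
  ring

-- commutation of mixed wirtinger derivatives for C^2 maps
lemma wirt_comm {g : ℂ → ℂ} {z : ℂ} (hg : ContDiff ℝ (⊤ : ℕ∞) g) :
    wirtZbar (wirtZ g) z = wirtZ (wirtZbar g) z := by
  have hsym : IsSymmSndFDerivAt ℝ g z :=
    hg.contDiffAt.isSymmSndFDerivAt (by simp [minSmoothness_of_isRCLikeNormedField]; exact WithTop.coe_le_coe.mpr (le_top : (2:ℕ∞) ≤ ⊤))
  have hd : DifferentiableAt ℝ (fderiv ℝ g) z := by
    have := hg.fderiv_right (m := (⊤ : ℕ∞)) le_rfl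
    exact (this.differentiable (by decide)).differentiableAt
  have hap : ∀ (v : ℂ), fderiv ℝ (fun w => fderiv ℝ g w v) z
      = (ContinuousLinearMap.apply ℝ ℂ v).comp (fderiv ℝ (fderiv ℝ g) z) := by
    intro v
    exact ((ContinuousLinearMap.apply ℝ ℂ v).hasFDerivAt.comp z hd.hasFDerivAt).fderiv
  have h1 : ∀ v u : ℂ, fderiv ℝ (fun w => fderiv ℝ g w v) z u
      = fderiv ℝ (fderiv ℝ g) z u v := by
    intro v u; rw [hap v]; rfl
  unfold wirtZ wirtZbar
  have hD1 : DifferentiableAt ℝ (fun w => fderiv ℝ g w 1) z :=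
    (ContinuousLinearMap.apply ℝ ℂ (1:ℂ)).differentiableAt.comp z hd
  have hDI : DifferentiableAt ℝ (fun w => fderiv ℝ g w Complex.I) z :=
    (ContinuousLinearMap.apply ℝ ℂ (Complex.I:ℂ)).differentiableAt.comp z hd
  rw [fderiv_const_mul (by exact hD1.sub (DifferentiableAt.const_mul hDI _)),
      fderiv_const_mul (by exact hD1.add (DifferentiableAt.const_mul hDI _))]
  rw [fderiv_fun_sub hD1 (DifferentiableAt.const_mul hDI _),
      fderiv_fun_add hD1 (DifferentiableAt.const_mul hDI _)]
  rw [fderiv_const_mul hDI Complex.I]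
  simp only [ContinuousLinearMap.smul_apply, ContinuousLinearMap.sub_apply,
    ContinuousLinearMap.add_apply, smul_eq_mul]
  rw [h1 1 1, h1 1 Complex.I, h1 Complex.I 1, h1 Complex.I Complex.I]
  rw [hsym 1 Complex.I]
  ring

-- ===== auxiliary toolkit (appended to statement defs) =====

lemma wirtZ_const_mul {g : ℂ → ℂ} {z : ℂ} (c : ℂ) (hg : DifferentiableAt ℝ g z) :
    wirtZ (fun w => c * g w) z = c * wirtZ g z := by
  rw [wirtZ_mul (differentiableAt_const c) hg, wirtZ_const]; ring

lemma wirtZbar_const_mul {g : ℂ → ℂ} {z : ℂ} (c : ℂ) (hg : DifferentiableAt ℝ g z) :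
    wirtZbar (fun w => c * g w) z = c * wirtZbar g z := by
  rw [wirtZbar_mul (differentiableAt_const c) hg, wirtZbar_const]; ring

lemma pairC_comm {m : ℕ} (u v : Fin m → ℂ) : pairC u v = pairC v u := by
  unfold pairC; apply Finset.sum_congr rfl; intros; ring

lemma pairC_conj_conj {m : ℕ} (a b : Fin m → ℂ) :
    pairC (fun i => (starRingEnd ℂ) (a i)) (fun i => (starRingEnd ℂ) (b i))
      = (starRingEnd ℂ) (pairC a b) := by
  unfold pairC; rw [map_sum]; apply Finset.sum_congr rfl; intros; rw [map_mul]

lemma pairC_conj_real {m : ℕ} (a : Fin m → ℂ) (r : Fin m → ℝ) :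
    pairC (fun i => (starRingEnd ℂ) (a i)) (fun i => ((r i : ℝ) : ℂ))
      = (starRingEnd ℂ) (pairC a (fun i => ((r i : ℝ) : ℂ))) := by
  unfold pairC; rw [map_sum]; apply Finset.sum_congr rfl; intros
  rw [map_mul, Complex.conj_ofReal]

lemma pairC_comb2_right {m : ℕ} (u a b : Fin m → ℂ) (c : ℂ) :
    pairC u (fun i => a i + c * b i) = pairC u a + c * pairC u b := by
  unfold pairC
  rw [Finset.mul_sum, ← Finset.sum_add_distrib]
  apply Finset.sum_congr rfl; intros; ring

lemma pairC_mul_left {m : ℕ} (a v : Fin m → ℂ) (c : ℂ) :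
    pairC (fun i => c * a i) v = c * pairC a v := by
  unfold pairC; rw [Finset.mul_sum]; apply Finset.sum_congr rfl; intros; ring

lemma pairC_comb3_right {m : ℕ} (u a b e : Fin m → ℂ) (c d : ℂ) :
    pairC u (fun i => a i + c * b i + d * e i)
      = pairC u a + c * pairC u b + d * pairC u e := by
  unfold pairC
  rw [Finset.mul_sum, Finset.mul_sum, ← Finset.sum_add_distrib, ← Finset.sum_add_distrib]
  apply Finset.sum_congr rfl; intros; ring

lemma pairC_comb4_left {m : ℕ} (a b c d v : Fin m → ℂ) (c1 c2 c3 c4 : ℂ) :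
    pairC (fun i => c1 * a i + c2 * b i + c3 * c i + c4 * d i) v
      = c1 * pairC a v + c2 * pairC b v + c3 * pairC c v + c4 * pairC d v := by
  unfold pairC
  rw [Finset.mul_sum, Finset.mul_sum, Finset.mul_sum, Finset.mul_sum,
    ← Finset.sum_add_distrib, ← Finset.sum_add_distrib, ← Finset.sum_add_distrib]
  apply Finset.sum_congr rfl; intros; ring

open Matrix in
lemma frame_span {m : ℕ} {e : Fin m → Fin m → ℂ} {v : Fin m → ℂ}
    (hdet : (Matrix.of fun j k => pairC (e j) (e k)).det ≠ 0)
    (hv : ∀ j, pairC (e j) v = 0) : v = 0 := by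
  set A : Matrix (Fin m) (Fin m) ℂ := Matrix.of fun j i => e j i with hA
  have hG : (Matrix.of fun j k => pairC (e j) (e k)) = A * Aᵀ := by
    ext j k
    simp [Matrix.mul_apply, pairC, hA]
  have hdA : A.det ≠ 0 := by
    intro h; apply hdet; rw [hG, Matrix.det_mul, Matrix.det_transpose, h]; ring
  have hAv : A *ᵥ v = 0 := by
    ext j
    simpa [Matrix.mulVec, dotProduct, pairC, hA] using hv j
  have h2 := congrArg (fun w => A⁻¹ *ᵥ w) hAv
  simpa [Matrix.mulVec_mulVec, Matrix.nonsing_inv_mul A (isUnit_iff_ne_zero.mpr hdA),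
    Matrix.one_mulVec, Matrix.mulVec_zero] using h2

lemma det5_ne {h : ℂ} (hh : h ≠ 0) :
    (Matrix.det !![1,0,0,0,0; 0,0,h,0,0; 0,h,0,0,0; (0:ℂ),0,0,1,0; 0,0,0,0,1]) ≠ 0 := by
  rw [show (Matrix.det !![1,0,0,0,0; 0,0,h,0,0; 0,h,0,0,0; (0:ℂ),0,0,1,0; 0,0,0,0,1]) = -h^2 by
    simp [Matrix.det_succ_row_zero, Fin.sum_univ_succ, Fin.succAbove]; ring]
  simpa using pow_ne_zero 2 hh

lemma wirtZ_pairC {m : ℕ} {u v : ℂ → Fin m → ℂ}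
    (hu : ∀ i, ContDiff ℝ (⊤ : ℕ∞) (fun w => u w i))
    (hv : ∀ i, ContDiff ℝ (⊤ : ℕ∞) (fun w => v w i)) (z : ℂ) :
    wirtZ (fun w => pairC (u w) (v w)) z
      = pairC (WZ u z) (v z) + pairC (u z) (WZ v z) := by
  simp only [pairC]
  rw [wirtZ_sum Finset.univ (fun i _ =>
    (((hu i).differentiable (by decide)) z).fun_mul (((hv i).differentiable (by decide)) z))]
  rw [Finset.sum_congr rfl (fun i _ => wirtZ_mul
    (((hu i).differentiable (by decide)) z) (((hv i).differentiable (by decide)) z))]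
  rw [Finset.sum_add_distrib]
  rfl

lemma wirtZbar_pairC {m : ℕ} {u v : ℂ → Fin m → ℂ}
    (hu : ∀ i, ContDiff ℝ (⊤ : ℕ∞) (fun w => u w i))
    (hv : ∀ i, ContDiff ℝ (⊤ : ℕ∞) (fun w => v w i)) (z : ℂ) :
    wirtZbar (fun w => pairC (u w) (v w)) z
      = pairC (WZb u z) (v z) + pairC (u z) (WZb v z) := by
  simp only [pairC]
  rw [wirtZbar_sum Finset.univ (fun i _ =>
    (((hu i).differentiable (by decide)) z).fun_mul (((hv i).differentiable (by decide)) z))]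
  rw [Finset.sum_congr rfl (fun i _ => wirtZbar_mul
    (((hu i).differentiable (by decide)) z) (((hv i).differentiable (by decide)) z))]
  rw [Finset.sum_add_distrib]
  rfl

lemma wirtZbar_ofReal {u : ℂ → ℝ} {z : ℂ}
    (hu : DifferentiableAt ℝ (fun w => ((u w : ℝ) : ℂ)) z) :
    wirtZbar (fun w => ((u w : ℝ) : ℂ)) z
      = (starRingEnd ℂ) (wirtZ (fun w => ((u w : ℝ) : ℂ)) z) := by
  have h := wirtZbar_conj (g := fun w => ((u w : ℝ) : ℂ)) hu
  simpa [Complex.conj_ofReal] using h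

lemma smooth_Fc {m : ℕ} {g : ℂ → Fin m → ℝ} (hg : ContDiff ℝ (⊤ : ℕ∞) g) (i : Fin m) :
    ContDiff ℝ (⊤ : ℕ∞) (fun w => Fc g w i) :=
  Complex.ofRealCLM.contDiff.comp ((contDiff_pi.mp (hg.of_le (by simp))) i)

lemma WZb_conj_WZ {m : ℕ} {g : ℂ → Fin m → ℝ} (hg : ContDiff ℝ (⊤ : ℕ∞) g) :
    ∀ z i, WZb (Fc g) z i = (starRingEnd ℂ) (WZ (Fc g) z i) := by
  intro z i
  exact wirtZbar_ofReal (((smooth_Fc hg i).differentiable (by decide)) z)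

lemma pairC_Fc_Fc {m : ℕ} (a b : ℂ → Fin m → ℝ) (z : ℂ) :
    pairC (Fc a z) (Fc b z) = ((∑ i, a z i * b z i : ℝ) : ℂ) := by
  unfold pairC Fc cV; push_cast; rfl

lemma pairC_mul_right {m : ℕ} (u a : Fin m → ℂ) (c : ℂ) :
    pairC u (fun i => c * a i) = c * pairC u a := by
  unfold pairC; rw [Finset.mul_sum]; apply Finset.sum_congr rfl; intros; ring

lemma pairC_comb2s_right {m : ℕ} (u a b : Fin m → ℂ) (c d : ℂ) :
    pairC u (fun i => c * a i + d * b i) = c * pairC u a + d * pairC u b := by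
  unfold pairC
  rw [Finset.mul_sum, Finset.mul_sum, ← Finset.sum_add_distrib]
  apply Finset.sum_congr rfl; intros; ring

set_option maxHeartbeats 2000000 in
set_option maxRecDepth 8000 in
/-- rotation of the adapted normal frame, `N_z ψ₃ = i θ_z ψ₄`. -/
theorem frame_rotation (f : ℂ → Fin 5 → ℝ) (ρ : ℂ → ℝ) (hf : IsConfMinImm f ρ)
    (ψ₃ ψ₄ : ℂ → Fin 5 → ℝ) (θ : ℂ → ℝ) (hframe : S4Frame f ρ ψ₃ ψ₄ θ) :
    ∀ (z : ℂ) (i : Fin 5),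
      NZ f ρ (Fc ψ₃) z i = Complex.I * dZ θ z * ((ψ₄ z i : ℝ) : ℂ) := by
  obtain ⟨hfC, hρC, hsph, hconf0, hconf, hmin⟩ := hf
  obtain ⟨h3C, h4C, hθC, h3N, h4N, h33, h44, h34, hΩΩ, hΩre, hΩim⟩ := hframe
  -- smoothness packs
  have hFs : ∀ i, ContDiff ℝ (⊤ : ℕ∞) (fun w => Fc f w i) := smooth_Fc hfC
  have h3s : ∀ i, ContDiff ℝ (⊤ : ℕ∞) (fun w => Fc ψ₃ w i) := smooth_Fc h3C
  have h4s : ∀ i, ContDiff ℝ (⊤ : ℕ∞) (fun w => Fc ψ₄ w i) := smooth_Fc h4C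
  have hFzs : ∀ i, ContDiff ℝ (⊤ : ℕ∞) (fun w => WZ (Fc f) w i) :=
    fun i => (hFs i).wirtZ_smooth
  have hFzbs : ∀ i, ContDiff ℝ (⊤ : ℕ∞) (fun w => WZb (Fc f) w i) :=
    fun i => (hFs i).wirtZbar_smooth
  have hFzzs : ∀ i, ContDiff ℝ (⊤ : ℕ∞) (fun w => WZ (WZ (Fc f)) w i) :=
    fun i => (hFzs i).wirtZ_smooth
  have h3zs : ∀ i, ContDiff ℝ (⊤ : ℕ∞) (fun w => WZ (Fc ψ₃) w i) :=
    fun i => (h3s i).wirtZ_smooth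
  have hρsC : ContDiff ℝ (⊤ : ℕ∞) (fun w => ((ρ w : ℝ) : ℂ)) :=
    Complex.ofRealCLM.contDiff.comp (hρC.of_le (by simp))
  have hθsC : ContDiff ℝ (⊤ : ℕ∞) (fun w => ((θ w : ℝ) : ℂ)) :=
    Complex.ofRealCLM.contDiff.comp (hθC.of_le (by simp))
  have hdZρs : ContDiff ℝ (⊤ : ℕ∞) (dZ ρ) := hρsC.wirtZ_smooth
  have hEsC : ContDiff ℝ (⊤ : ℕ∞) (fun w => ((Real.exp (2 * ρ w) : ℝ) : ℂ)) :=
    Complex.ofRealCLM.contDiff.comp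
      (Real.contDiff_exp.comp (contDiff_const.mul (hρC.of_le (by simp))))
  have hcoshC : ContDiff ℝ (⊤ : ℕ∞) (fun w => ((Real.cosh (θ w) : ℝ) : ℂ)) :=
    Complex.ofRealCLM.contDiff.comp (Real.contDiff_cosh.comp (hθC.of_le (by simp)))
  have hsinhC : ContDiff ℝ (⊤ : ℕ∞) (fun w => ((Real.sinh (θ w) : ℝ) : ℂ)) :=
    Complex.ofRealCLM.contDiff.comp (Real.contDiff_sinh.comp (hθC.of_le (by simp)))
  have dd : ∀ {g : ℂ → ℂ}, ContDiff ℝ (⊤ : ℕ∞) g → ∀ z, DifferentiableAt ℝ g z :=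
    fun h z => (h.differentiable (by decide)) z
  have hρD : Differentiable ℝ ρ := ((hρC.of_le (by simp) : ContDiff ℝ (⊤:ℕ∞) ρ)).differentiable (by decide)
  have hθD : Differentiable ℝ θ := ((hθC.of_le (by simp) : ContDiff ℝ (⊤:ℕ∞) θ)).differentiable (by decide)
  have hρd : ∀ z, DifferentiableAt ℝ ρ z := fun z => hρD z
  have hθd : ∀ z, DifferentiableAt ℝ θ z := fun z => hθD z
  -- conjugation relations
  have hFcj : ∀ z i, WZb (Fc f) z i = (starRingEnd ℂ) (WZ (Fc f) z i) := WZb_conj_WZ hfC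
  have h3cj : ∀ z i, WZb (Fc ψ₃) z i = (starRingEnd ℂ) (WZ (Fc ψ₃) z i) := WZb_conj_WZ h3C
  -- A1 : <F,F> = 1
  have A1 : ∀ z, pairC (Fc f z) (Fc f z) = 1 := by
    intro z
    rw [pairC_Fc_Fc]
    rw [show (∑ i, f z i * f z i) = ∑ i, (f z i) ^ 2 by
      apply Finset.sum_congr rfl; intros; ring]
    rw [hsph z]; norm_num
  -- A2 : <F,F_z> = 0
  have A2 : ∀ z, pairC (Fc f z) (WZ (Fc f) z) = 0 := by
    intro z
    have hd := wirtZ_pairC (u := Fc f) (v := Fc f) hFs hFs z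
    rw [show (fun w => pairC (Fc f w) (Fc f w)) = fun _ => (1 : ℂ) from funext A1,
      wirtZ_const, pairC_comm (WZ (Fc f) z) (Fc f z)] at hd
    exact add_self_eq_zero.mp hd.symm
  -- <F,F_zb> = 0
  have A2b : ∀ z, pairC (Fc f z) (WZb (Fc f) z) = 0 := by
    intro z
    rw [pairC_comm]
    rw [show WZb (Fc f) z = fun i => (starRingEnd ℂ) (WZ (Fc f) z i) from funext (hFcj z)]
    rw [show Fc f z = fun i => ((f z i : ℝ) : ℂ) from rfl]
    rw [pairC_conj_real, show (fun i => ((f z i : ℝ) : ℂ)) = Fc f z from rfl,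
      pairC_comm (WZ (Fc f) z) (Fc f z), A2 z]
    simp
  -- A4 : <F_z, F_zb> = (1/2) E
  have A4 : ∀ z, pairC (WZ (Fc f) z) (WZb (Fc f) z)
      = (1 / 2 : ℂ) * ((Real.exp (2 * ρ z) : ℝ) : ℂ) := by
    intro z
    rw [show WZb (Fc f) z = conjV (WZ (Fc f) z) from funext fun i => hFcj z i]
    exact hconf z
  -- <F_zb, F_zb> = 0
  have A4b : ∀ z, pairC (WZb (Fc f) z) (WZb (Fc f) z) = 0 := by
    intro z
    rw [show WZb (Fc f) z = fun i => (starRingEnd ℂ) (WZ (Fc f) z i) from funext (hFcj z)]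
    rw [pairC_conj_conj, hconf0 z]; simp
  -- derivative of E
  have hED : ∀ z, wirtZ (fun w => ((Real.exp (2 * ρ w) : ℝ) : ℂ)) z
      = 2 * dZ ρ z * ((Real.exp (2 * ρ z) : ℝ) : ℂ) := by
    intro z
    have hF : HasDerivAt (fun t : ℝ => Real.exp (2 * t)) (Real.exp (2 * ρ z) * (2 * 1)) (ρ z) :=
      (Real.hasDerivAt_exp (2 * ρ z)).comp (ρ z) ((hasDerivAt_id (ρ z)).const_mul 2)
    have h := wirtZ_real_comp (u := ρ) (F := fun t : ℝ => Real.exp (2 * t)) hF (hρd z)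
    simp only [dZ]
    rw [show (fun w => ((Real.exp (2 * ρ w) : ℝ) : ℂ))
        = fun w => (((fun t : ℝ => Real.exp (2 * t)) (ρ w) : ℝ) : ℂ) from rfl, h]
    push_cast; ring
  -- mixed second derivative via commutation
  have hminz : ∀ z i, WZ (WZb (Fc f)) z i
      = -(1 / 2 : ℂ) * ((Real.exp (2 * ρ z) : ℝ) : ℂ) * Fc f z i := by
    intro z i
    have hc : wirtZbar (fun w => WZ (Fc f) w i) z = wirtZ (fun w => WZb (Fc f) w i) z :=
      wirt_comm (hFs i)
    have : WZ (WZb (Fc f)) z i = WZb (WZ (Fc f)) z i := hc.symm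
    rw [this, hmin z i]
  -- normality derivative identities for ψ₃
  have h3a : ∀ z, pairC (WZ (Fc ψ₃) z) (Fc f z) = 0 := by
    intro z
    have hd := wirtZ_pairC (u := Fc ψ₃) (v := Fc f) h3s hFs z
    rw [show (fun w => pairC (Fc ψ₃ w) (Fc f w)) = fun _ => (0 : ℂ)
        from funext fun w => (h3N w).1, wirtZ_const, (h3N z).2.1] at hd
    linear_combination -hd
  -- pairings among the ψ's
  have P33 : ∀ z, pairC (Fc ψ₃ z) (Fc ψ₃ z) = 1 := by
    intro z
    rw [pairC_Fc_Fc, show (∑ i, ψ₃ z i * ψ₃ z i) = ∑ i, (ψ₃ z i) ^ 2 by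
      apply Finset.sum_congr rfl; intros; ring, h33 z]
    norm_num
  have P44 : ∀ z, pairC (Fc ψ₄ z) (Fc ψ₄ z) = 1 := by
    intro z
    rw [pairC_Fc_Fc, show (∑ i, ψ₄ z i * ψ₄ z i) = ∑ i, (ψ₄ z i) ^ 2 by
      apply Finset.sum_congr rfl; intros; ring, h44 z]
    norm_num
  have P34 : ∀ z, pairC (Fc ψ₃ z) (Fc ψ₄ z) = 0 := by
    intro z; rw [pairC_Fc_Fc, h34 z]; norm_num
  -- Hopf decomposition
  have A10 : ∀ z i, Hopf f ρ z i = ((Real.cosh (θ z) : ℝ) : ℂ) * Fc ψ₃ z i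
      + Complex.I * ((Real.sinh (θ z) : ℝ) : ℂ) * Fc ψ₄ z i := by
    intro z i
    rw [← Complex.re_add_im (Hopf f ρ z i), hΩre z i, hΩim z i]
    simp only [Fc, cV]
    push_cast; ring
  have A12 : ∀ z, pairC (Fc ψ₃ z) (Hopf f ρ z) = ((Real.cosh (θ z) : ℝ) : ℂ) := by
    intro z
    rw [show Hopf f ρ z = fun i => ((Real.cosh (θ z) : ℝ) : ℂ) * Fc ψ₃ z i
        + (Complex.I * ((Real.sinh (θ z) : ℝ) : ℂ)) * Fc ψ₄ z i
      from funext fun i => by rw [A10 z i]]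
    rw [pairC_comb2s_right, P33 z, P34 z]
    ring
  -- second-order identities
  have hFzzdec : ∀ z, WZ (WZ (Fc f)) z
      = fun i => Hopf f ρ z i + 2 * dZ ρ z * WZ (Fc f) z i := by
    intro z; funext i; simp only [Hopf]; ring
  have h3b : ∀ z, pairC (WZ (Fc ψ₃) z) (WZ (Fc f) z) = -((Real.cosh (θ z) : ℝ) : ℂ) := by
    intro z
    have hd := wirtZ_pairC (u := Fc ψ₃) (v := WZ (Fc f)) h3s hFzs z
    rw [show (fun w => pairC (Fc ψ₃ w) (WZ (Fc f) w)) = fun _ => (0 : ℂ)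
        from funext fun w => (h3N w).2.1, wirtZ_const, hFzzdec z, pairC_comb2_right,
        A12 z, (h3N z).2.1] at hd
    linear_combination -hd
  have h3c : ∀ z, pairC (WZ (Fc ψ₃) z) (WZb (Fc f) z) = 0 := by
    intro z
    have hd := wirtZ_pairC (u := Fc ψ₃) (v := WZb (Fc f)) h3s hFzbs z
    rw [show (fun w => pairC (Fc ψ₃ w) (WZb (Fc f) w)) = fun _ => (0 : ℂ)
        from funext fun w => (h3N w).2.2, wirtZ_const] at hd
    rw [show WZ (WZb (Fc f)) z
        = fun i => (-(1 / 2 : ℂ) * ((Real.exp (2 * ρ z) : ℝ) : ℂ)) * Fc f z i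
      from funext fun i => by rw [hminz z i]] at hd
    rw [pairC_mul_right, (h3N z).1] at hd
    linear_combination -hd
  have h3d : ∀ z, pairC (WZ (Fc ψ₃) z) (Fc ψ₃ z) = 0 := by
    intro z
    have hd := wirtZ_pairC (u := Fc ψ₃) (v := Fc ψ₃) h3s h3s z
    rw [show (fun w => pairC (Fc ψ₃ w) (Fc ψ₃ w)) = fun _ => (1 : ℂ) from funext P33,
      wirtZ_const, pairC_comm (WZ (Fc ψ₃) z) (Fc ψ₃ z)] at hd
    rw [pairC_comm (WZ (Fc ψ₃) z) (Fc ψ₃ z)]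
    exact add_self_eq_zero.mp hd.symm
  have h4e : ∀ z, pairC (WZb (Fc ψ₄) z) (Fc ψ₄ z) = 0 := by
    intro z
    have hd := wirtZbar_pairC (u := Fc ψ₄) (v := Fc ψ₄) h4s h4s z
    rw [show (fun w => pairC (Fc ψ₄ w) (Fc ψ₄ w)) = fun _ => (1 : ℂ) from funext P44,
      wirtZbar_const, pairC_comm (WZb (Fc ψ₄) z) (Fc ψ₄ z)] at hd
    rw [pairC_comm (WZb (Fc ψ₄) z) (Fc ψ₄ z)]
    exact add_self_eq_zero.mp hd.symm
  -- Codazzi: the z̄-derivative of the Hopf field is tangent along f_z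
  have A14 : ∀ z, ∃ c : ℂ, WZb (Hopf f ρ) z = fun i => c * WZ (Fc f) z i := by
    intro z
    refine ⟨-(1 / 2 : ℂ) * ((Real.exp (2 * ρ z) : ℝ) : ℂ) - 2 * wirtZbar (dZ ρ) z,
      funext fun i => ?_⟩
    show wirtZbar (fun w => Hopf f ρ w i) z = _
    rw [show (fun w => Hopf f ρ w i)
        = fun w => WZ (WZ (Fc f)) w i - 2 * dZ ρ w * WZ (Fc f) w i from rfl]
    rw [wirtZbar_sub (dd (hFzzs i) z) (((dd hdZρs z).const_mul 2).fun_mul (dd (hFzs i) z))]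
    rw [show wirtZbar (fun w => WZ (WZ (Fc f)) w i) z
        = wirtZ (fun w => WZb (WZ (Fc f)) w i) z from wirt_comm (hFzs i)]
    rw [show (fun w => WZb (WZ (Fc f)) w i)
        = fun w => (-(1 / 2 : ℂ) * ((Real.exp (2 * ρ w) : ℝ) : ℂ)) * Fc f w i
      from funext fun w => by rw [hmin w i]]
    rw [wirtZ_mul ((dd hEsC z).const_mul (-(1 / 2 : ℂ))) (dd (hFs i) z)]
    rw [wirtZ_const_mul (-(1 / 2 : ℂ)) (dd hEsC z), hED z]
    rw [wirtZbar_mul ((dd hdZρs z).const_mul 2) (dd (hFzs i) z)]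
    rw [wirtZbar_const_mul 2 (dd hdZρs z)]
    rw [show wirtZbar (fun w => WZ (Fc f) w i) z
        = -(1 / 2 : ℂ) * ((Real.exp (2 * ρ z) : ℝ) : ℂ) * Fc f z i from hmin z i]
    rw [show wirtZ (fun w => Fc f w i) z = WZ (Fc f) z i from rfl]
    ring
  -- rotation speed of ψ₃ against ψ₄ (z̄ version)
  have A16 : ∀ z, pairC (WZb (Fc ψ₃) z) (Fc ψ₄ z)
      = -(Complex.I * wirtZbar (fun w => ((θ w : ℝ) : ℂ)) z) := by
    intro z
    obtain ⟨c, hc⟩ := A14 z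
    have hL : pairC (WZb (Hopf f ρ) z) (Fc ψ₄ z) = 0 := by
      rw [hc, pairC_mul_left, pairC_comm (WZ (Fc f) z) (Fc ψ₄ z), (h4N z).2.1]
      ring
    have hvec : ∀ i, WZb (Hopf f ρ) z i =
        (((Real.sinh (θ z) : ℝ) : ℂ) * wirtZbar (fun w => ((θ w : ℝ) : ℂ)) z) * Fc ψ₃ z i
        + ((Real.cosh (θ z) : ℝ) : ℂ) * WZb (Fc ψ₃) z i
        + (Complex.I * (((Real.cosh (θ z) : ℝ) : ℂ)
            * wirtZbar (fun w => ((θ w : ℝ) : ℂ)) z)) * Fc ψ₄ z i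
        + (Complex.I * ((Real.sinh (θ z) : ℝ) : ℂ)) * WZb (Fc ψ₄) z i := by
      intro i
      show wirtZbar (fun w => Hopf f ρ w i) z = _
      rw [show (fun w => Hopf f ρ w i)
          = fun w => ((Real.cosh (θ w) : ℝ) : ℂ) * Fc ψ₃ w i
            + (Complex.I * ((Real.sinh (θ w) : ℝ) : ℂ)) * Fc ψ₄ w i
        from funext fun w => by rw [A10 w i]]
      rw [wirtZbar_add ((dd hcoshC z).fun_mul (dd (h3s i) z))
        (((dd hsinhC z).const_mul Complex.I).fun_mul (dd (h4s i) z))]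
      rw [wirtZbar_mul (dd hcoshC z) (dd (h3s i) z)]
      rw [wirtZbar_mul ((dd hsinhC z).const_mul Complex.I) (dd (h4s i) z)]
      rw [wirtZbar_const_mul Complex.I (dd hsinhC z)]
      rw [wirtZbar_real_comp (u := θ) (F := Real.cosh) (Real.hasDerivAt_cosh (θ z)) (hθd z)]
      rw [wirtZbar_real_comp (u := θ) (F := Real.sinh) (Real.hasDerivAt_sinh (θ z)) (hθd z)]
      rw [show wirtZbar (fun w => Fc ψ₃ w i) z = WZb (Fc ψ₃) z i from rfl,
        show wirtZbar (fun w => Fc ψ₄ w i) z = WZb (Fc ψ₄) z i from rfl]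
      ring
    have hp : pairC (WZb (Hopf f ρ) z) (Fc ψ₄ z)
        = ((Real.cosh (θ z) : ℝ) : ℂ) * pairC (WZb (Fc ψ₃) z) (Fc ψ₄ z)
          + Complex.I * (((Real.cosh (θ z) : ℝ) : ℂ)
            * wirtZbar (fun w => ((θ w : ℝ) : ℂ)) z) := by
      rw [show WZb (Hopf f ρ) z = fun i =>
          (((Real.sinh (θ z) : ℝ) : ℂ) * wirtZbar (fun w => ((θ w : ℝ) : ℂ)) z) * Fc ψ₃ z i
          + ((Real.cosh (θ z) : ℝ) : ℂ) * WZb (Fc ψ₃) z i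
          + (Complex.I * (((Real.cosh (θ z) : ℝ) : ℂ)
              * wirtZbar (fun w => ((θ w : ℝ) : ℂ)) z)) * Fc ψ₄ z i
          + (Complex.I * ((Real.sinh (θ z) : ℝ) : ℂ)) * WZb (Fc ψ₄) z i
        from funext hvec]
      rw [pairC_comb4_left, P34 z, P44 z, h4e z]
      ring
    have hcne : ((Real.cosh (θ z) : ℝ) : ℂ) ≠ 0 := by
      exact_mod_cast (Real.cosh_pos (θ z)).ne'
    apply mul_left_cancel₀ hcne
    rw [hp] at hL
    linear_combination hL
  -- rotation speed, z version
  have A17 : ∀ z, pairC (WZ (Fc ψ₃) z) (Fc ψ₄ z) = Complex.I * dZ θ z := by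
    intro z
    have hwz : WZ (Fc ψ₃) z = fun i => (starRingEnd ℂ) (WZb (Fc ψ₃) z i) :=
      funext fun i => by rw [h3cj z i, Complex.conj_conj]
    rw [hwz, show Fc ψ₄ z = fun i => ((ψ₄ z i : ℝ) : ℂ) from rfl, pairC_conj_real,
      show (fun i => ((ψ₄ z i : ℝ) : ℂ)) = Fc ψ₄ z from rfl, A16 z]
    have hcj : (starRingEnd ℂ) (wirtZbar (fun w => ((θ w : ℝ) : ℂ)) z) = dZ θ z := by
      rw [wirtZbar_ofReal (dd hθsC z), Complex.conj_conj]
      rfl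
    rw [map_neg, map_mul, Complex.conj_I, hcj]
    ring
  -- final assembly at a point
  intro z i
  have hdvdec : (fun j => NZ f ρ (Fc ψ₃) z j - Complex.I * dZ θ z * Fc ψ₄ z j)
      = fun j => WZ (Fc ψ₃) z j
        + (2 * ((Real.exp (-2 * ρ z) : ℝ) : ℂ) * ((Real.cosh (θ z) : ℝ) : ℂ)) * WZb (Fc f) z j
        + (-(Complex.I * dZ θ z)) * Fc ψ₄ z j := by
    funext j
    simp only [NZ]
    rw [A12 z]
    ring
  have hEinv : ((Real.exp (-2 * ρ z) : ℝ) : ℂ) * ((Real.exp (2 * ρ z) : ℝ) : ℂ) = 1 := by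
    rw [← Complex.ofReal_mul, ← Real.exp_add]
    norm_num
  have hv0 : pairC (Fc f z) (fun j => NZ f ρ (Fc ψ₃) z j - Complex.I * dZ θ z * Fc ψ₄ z j) = 0 := by
    rw [hdvdec, pairC_comb3_right, pairC_comm (Fc f z) (WZ (Fc ψ₃) z), h3a z, A2b z,
      pairC_comm (Fc f z) (Fc ψ₄ z), (h4N z).1]
    ring
  have hv1 : pairC (WZ (Fc f) z) (fun j => NZ f ρ (Fc ψ₃) z j - Complex.I * dZ θ z * Fc ψ₄ z j) = 0 := by
    rw [hdvdec, pairC_comb3_right, pairC_comm (WZ (Fc f) z) (WZ (Fc ψ₃) z), h3b z, A4 z,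
      pairC_comm (WZ (Fc f) z) (Fc ψ₄ z), (h4N z).2.1]
    linear_combination ((Real.cosh (θ z) : ℝ) : ℂ) * hEinv
  have hv2 : pairC (WZb (Fc f) z) (fun j => NZ f ρ (Fc ψ₃) z j - Complex.I * dZ θ z * Fc ψ₄ z j) = 0 := by
    rw [hdvdec, pairC_comb3_right, pairC_comm (WZb (Fc f) z) (WZ (Fc ψ₃) z), h3c z, A4b z,
      pairC_comm (WZb (Fc f) z) (Fc ψ₄ z), (h4N z).2.2]
    ring
  have hv3 : pairC (Fc ψ₃ z) (fun j => NZ f ρ (Fc ψ₃) z j - Complex.I * dZ θ z * Fc ψ₄ z j) = 0 := by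
    rw [hdvdec, pairC_comb3_right, pairC_comm (Fc ψ₃ z) (WZ (Fc ψ₃) z), h3d z,
      (h3N z).2.2, P34 z]
    ring
  have hv4 : pairC (Fc ψ₄ z) (fun j => NZ f ρ (Fc ψ₃) z j - Complex.I * dZ θ z * Fc ψ₄ z j) = 0 := by
    rw [hdvdec, pairC_comb3_right, pairC_comm (Fc ψ₄ z) (WZ (Fc ψ₃) z), A17 z,
      (h4N z).2.2, P44 z]
    ring
  -- gram matrix entries
  have g10 : pairC (WZ (Fc f) z) (Fc f z) = 0 := by
    rw [pairC_comm]; exact A2 z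
  have g20 : pairC (WZb (Fc f) z) (Fc f z) = 0 := by
    rw [pairC_comm]; exact A2b z
  have g03 : pairC (Fc f z) (Fc ψ₃ z) = 0 := by
    rw [pairC_comm]; exact (h3N z).1
  have g04 : pairC (Fc f z) (Fc ψ₄ z) = 0 := by
    rw [pairC_comm]; exact (h4N z).1
  have g21 : pairC (WZb (Fc f) z) (WZ (Fc f) z)
      = (1 / 2 : ℂ) * ((Real.exp (2 * ρ z) : ℝ) : ℂ) := by
    rw [pairC_comm]; exact A4 z
  have g13 : pairC (WZ (Fc f) z) (Fc ψ₃ z) = 0 := by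
    rw [pairC_comm]; exact (h3N z).2.1
  have g14 : pairC (WZ (Fc f) z) (Fc ψ₄ z) = 0 := by
    rw [pairC_comm]; exact (h4N z).2.1
  have g23 : pairC (WZb (Fc f) z) (Fc ψ₃ z) = 0 := by
    rw [pairC_comm]; exact (h3N z).2.2
  have g24 : pairC (WZb (Fc f) z) (Fc ψ₄ z) = 0 := by
    rw [pairC_comm]; exact (h4N z).2.2
  have g43 : pairC (Fc ψ₄ z) (Fc ψ₃ z) = 0 := by
    rw [pairC_comm]; exact P34 z
  have hdet : (Matrix.of fun j k =>
      pairC (![Fc f z, WZ (Fc f) z, WZb (Fc f) z, Fc ψ₃ z, Fc ψ₄ z] j)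
        (![Fc f z, WZ (Fc f) z, WZb (Fc f) z, Fc ψ₃ z, Fc ψ₄ z] k)).det ≠ 0 := by
    rw [show (Matrix.of fun j k =>
        pairC (![Fc f z, WZ (Fc f) z, WZb (Fc f) z, Fc ψ₃ z, Fc ψ₄ z] j)
          (![Fc f z, WZ (Fc f) z, WZb (Fc f) z, Fc ψ₃ z, Fc ψ₄ z] k))
        = !![1,0,0,0,0;
             0,0,(1 / 2 : ℂ) * ((Real.exp (2 * ρ z) : ℝ) : ℂ),0,0;
             0,(1 / 2 : ℂ) * ((Real.exp (2 * ρ z) : ℝ) : ℂ),0,0,0;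
             (0:ℂ),0,0,1,0;
             0,0,0,0,1] by
      ext j k
      fin_cases j <;> fin_cases k <;>
        simp only [Matrix.of_apply, Matrix.cons_val_zero, Matrix.cons_val_one,
          Matrix.cons_val_two, Matrix.cons_val_three, Matrix.cons_val_four,
          Matrix.head_cons, Matrix.tail_cons, Matrix.head_fin_const, Fin.mk_zero,
          Fin.mk_one] <;>
        first
          | exact A1 z | exact A2 z | exact A2b z | exact g03 | exact g04
          | exact g10 | exact hconf0 z | exact A4 z | exact g13 | exact g14
          | exact g20 | exact g21 | exact A4b z | exact g23 | exact g24
          | exact (h3N z).1 | exact (h3N z).2.1 | exact (h3N z).2.2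
          | exact P33 z | exact P34 z
          | exact (h4N z).1 | exact (h4N z).2.1 | exact (h4N z).2.2
          | exact g43 | exact P44 z]
    apply det5_ne
    have : ((Real.exp (2 * ρ z) : ℝ) : ℂ) ≠ 0 := by
      exact_mod_cast (Real.exp_pos (2 * ρ z)).ne'
    intro h
    apply this
    have h2 : (2 : ℂ) * ((1 / 2 : ℂ) * ((Real.exp (2 * ρ z) : ℝ) : ℂ)) = 0 := by
      rw [h]; ring
    linear_combination h2
  have hzero : (fun j => NZ f ρ (Fc ψ₃) z j - Complex.I * dZ θ z * Fc ψ₄ z j) = 0 := by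
    apply frame_span hdet
    intro j
    fin_cases j
    · exact hv0
    · exact hv1
    · exact hv2
    · exact hv3
    · exact hv4
  have hdi := congrFun hzero i
  simp only [Pi.zero_apply] at hdi
  show NZ f ρ (Fc ψ₃) z i = Complex.I * dZ θ z * Fc ψ₄ z i
  linear_combination hdi
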